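/- Assume the Halpern setting: Q* : S × A → ℝ and g* ∈ ℝ satisfy 𝒯 Q* = Q* + g* • 1, ε ≥ 0, n ∈ ℕ, sequences Q, T : ℕ → (S × A → ℝ) satisfy Q k = (2/(k+2)) • Q 0 + (k/(k+2)) • T (k−1) for all 1 ≤ k ≤ n and ‖T k − 𝒯 (Q k)‖∞ ≤ ε for all 0 ≤ k ≤ n; assume additionally Sp(T k − T (k−1)) ≤ Sp(Q k − Q (k−1)) for all 1 ≤ k ≤ n. Define ρ_j = 2 * Sp(Q 0 − Q*) + (2/3) * ε * j. Then for every k with 1 ≤ k ≤ n: Sp(Q k − Q (k−1)) ≤ (2 / (k*(k+1))) * ∑_{i=1}^{k} ρ_{i+2}. -/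

import Mathlib

/-!
The Bellman operator is monotone and commutes with adding constants, hence nonexpansive for the
span seminorm. With the evaluation error this gives `Sp(T j - Q*) ≤ 2ε + Sp(Q j - Q*)`, and the
Halpern recursion, a convex combination of `Q 0` and `T (k-1)`, propagates it to
`Sp(Q j - Q*) ≤ Sp(Q 0 - Q*) + (2/3) ε j`, hence `Sp(T j - Q 0) ≤ ρ (j+3)`. Subtracting consecutive
iterates gives `Q (k+1) - Q k = (k+1)/(k+3) (T k - T (k-1)) + 2/((k+2)(k+3)) (T (k-1) - Q 0)`, so
with (17) the differences `d k` satisfy `d (k+1) ≤ (k+1)/(k+3) d k + 2/((k+2)(k+3)) ρ (k+2)`, and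
the claimed bound is stable under this recursion because `ρ` is nondecreasing.
-/

open Finset

noncomputable def supNorm {X : Type*} [Fintype X] [Nonempty X] (v : X → ℝ) : ℝ :=
  Finset.univ.sup' Finset.univ_nonempty fun x => |v x|

noncomputable def spanSN {X : Type*} [Fintype X] [Nonempty X] (v : X → ℝ) : ℝ :=
  (Finset.univ.sup' Finset.univ_nonempty v) - (Finset.univ.inf' Finset.univ_nonempty v)

noncomputable def sigma' {S A : Type*} [Fintype S] (P : S → A → Set (S → ℝ))
    (h : S → ℝ) (s : S) (a : A) : ℝ :=
  sInf {x : ℝ | ∃ p ∈ P s a, x = ∑ s', p s' * h s'}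

noncomputable def bellman {S A : Type*} [Fintype S] [Fintype A] [Nonempty A]
    (P : S → A → Set (S → ℝ)) (r : S → A → ℝ) (Q : S × A → ℝ) : S × A → ℝ :=
  fun sa => r sa.1 sa.2 +
    sigma' P (fun s' => Finset.univ.sup' Finset.univ_nonempty fun a' => Q (s', a')) sa.1 sa.2

section spanSN

variable {X : Type*} [Fintype X] [Nonempty X]

lemma spanSN_le_of_forall_mem_Icc {v : X → ℝ} {m M : ℝ} (h : ∀ x, v x ∈ Set.Icc m M) :
    spanSN v ≤ M - m :=
  sub_le_sub (sup'_le _ _ fun x _ => (h x).2) (le_inf' _ _ fun x _ => (h x).1)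

lemma spanSN_nonneg (v : X → ℝ) : 0 ≤ spanSN v := by
  obtain ⟨x⟩ := ‹Nonempty X›
  exact sub_nonneg.2 ((inf'_le v (mem_univ x)).trans (le_sup' v (mem_univ x)))

lemma spanSN_add_le (u v : X → ℝ) : spanSN (u + v) ≤ spanSN u + spanSN v := by
  refine (spanSN_le_of_forall_mem_Icc
    (m := univ.inf' univ_nonempty u + univ.inf' univ_nonempty v)
    (M := univ.sup' univ_nonempty u + univ.sup' univ_nonempty v) fun x =>
    ⟨add_le_add (inf'_le u (mem_univ x)) (inf'_le v (mem_univ x)),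
      add_le_add (le_sup' u (mem_univ x)) (le_sup' v (mem_univ x))⟩).trans_eq ?_
  simp only [spanSN]; ring

lemma spanSN_sub_le (u v : X → ℝ) : spanSN (u - v) ≤ spanSN u + spanSN v := by
  refine (spanSN_le_of_forall_mem_Icc
    (m := univ.inf' univ_nonempty u - univ.sup' univ_nonempty v)
    (M := univ.sup' univ_nonempty u - univ.inf' univ_nonempty v) fun x =>
    ⟨sub_le_sub (inf'_le u (mem_univ x)) (le_sup' v (mem_univ x)),
      sub_le_sub (le_sup' u (mem_univ x)) (inf'_le v (mem_univ x))⟩).trans_eq ?_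
  simp only [spanSN]; ring

lemma spanSN_smul_le {c : ℝ} (hc : 0 ≤ c) (v : X → ℝ) : spanSN (c • v) ≤ c * spanSN v := by
  refine (spanSN_le_of_forall_mem_Icc (m := c * univ.inf' univ_nonempty v)
    (M := c * univ.sup' univ_nonempty v) fun x =>
    ⟨mul_le_mul_of_nonneg_left (inf'_le v (mem_univ x)) hc,
      mul_le_mul_of_nonneg_left (le_sup' v (mem_univ x)) hc⟩).trans_eq ?_
  simp only [spanSN]; ring

lemma spanSN_add_smul_one_le (v : X → ℝ) (c : ℝ) : spanSN (v + c • 1) ≤ spanSN v := by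
  refine (spanSN_le_of_forall_mem_Icc (m := univ.inf' univ_nonempty v + c)
    (M := univ.sup' univ_nonempty v + c) fun x => ?_).trans_eq ?_
  · simp only [Pi.add_apply, Pi.smul_apply, Pi.one_apply, smul_eq_mul, mul_one]
    exact ⟨add_le_add_left (inf'_le v (mem_univ x)) c, add_le_add_left (le_sup' v (mem_univ x)) c⟩
  · simp only [spanSN]; ring

lemma spanSN_le_two_mul_supNorm (v : X → ℝ) : spanSN v ≤ 2 * supNorm v := by
  have h := spanSN_le_of_forall_mem_Icc (v := v) (m := -supNorm v) (M := supNorm v) fun x =>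
    abs_le.1 (le_sup' (fun x => |v x|) (mem_univ x))
  linarith

end spanSN

/-- Equivalent to `F` being monotone and commuting with the addition of constants, i.e. to `F`
being a topical map. -/
def IsTopical {X Y : Type*} (F : (X → ℝ) → Y → ℝ) : Prop :=
  ∀ u w : X → ℝ, ∀ c : ℝ, (∀ x, u x ≤ w x + c) → ∀ y, F u y ≤ F w y + c

lemma IsTopical.spanSN_sub_le {X Y : Type*} [Fintype X] [Nonempty X] [Fintype Y] [Nonempty Y]
    {F : (X → ℝ) → Y → ℝ} (hF : IsTopical F) (u w : X → ℝ) :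
    spanSN (F u - F w) ≤ spanSN (u - w) := by
  set M := univ.sup' univ_nonempty (u - w)
  set m := univ.inf' univ_nonempty (u - w)
  refine spanSN_le_of_forall_mem_Icc (m := m) (M := M) fun y => ⟨?_, ?_⟩
  · have := hF w u (-m) (fun x => by
      have := inf'_le (u - w) (mem_univ x); simp only [Pi.sub_apply] at this; linarith) y
    simp only [Pi.sub_apply]; linarith
  · have := hF u w M (fun x => by
      have := le_sup' (u - w) (mem_univ x); simp only [Pi.sub_apply] at this; linarith) y
    simp only [Pi.sub_apply]; linarith

lemma isTopical_sup' {S A : Type*} [Fintype A] [Nonempty A] :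
    IsTopical fun (Q : S × A → ℝ) (s : S) => univ.sup' univ_nonempty fun a => Q (s, a) :=
  fun _ w c h s => sup'_le _ _ fun a _ =>
    (h (s, a)).trans (add_le_add_left (le_sup' (fun a => w (s, a)) (mem_univ a)) c)

lemma stdSimplex_sum_mul_le_add {S : Type*} [Fintype S] {p : S → ℝ} (hp : p ∈ stdSimplex ℝ S)
    {u w : S → ℝ} {c : ℝ} (h : ∀ s, u s ≤ w s + c) :
    ∑ s, p s * u s ≤ ∑ s, p s * w s + c :=
  calc ∑ s, p s * u s ≤ ∑ s, p s * (w s + c) :=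
        sum_le_sum fun s _ => mul_le_mul_of_nonneg_left (h s) (hp.1 s)
    _ = ∑ s, p s * w s + c := by simp only [mul_add, sum_add_distrib, ← sum_mul, hp.2, one_mul]

lemma isTopical_sigma' {S A : Type*} [Fintype S] [Nonempty S] {P : S → A → Set (S → ℝ)}
    (hne : ∀ s a, (P s a).Nonempty) (hsub : ∀ s a, P s a ⊆ stdSimplex ℝ S) :
    IsTopical fun (h : S → ℝ) (sa : S × A) => sigma' P h sa.1 sa.2 := by
  rintro u w c huw ⟨s, a⟩
  have hbdd : BddBelow {x : ℝ | ∃ p ∈ P s a, x = ∑ s', p s' * u s'} := by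
    refine ⟨univ.inf' univ_nonempty u, ?_⟩
    rintro _ ⟨p, hp, rfl⟩
    have := stdSimplex_sum_mul_le_add (hsub s a hp) (u := 0) (w := u)
      (c := -univ.inf' univ_nonempty u) fun s' => by
        have := inf'_le u (mem_univ s'); simp only [Pi.zero_apply]; linarith
    simp only [Pi.zero_apply, mul_zero, sum_const_zero] at this
    linarith
  obtain ⟨p₀, hp₀⟩ := hne s a
  rw [← sub_le_iff_le_add]
  refine le_csInf ⟨_, p₀, hp₀, rfl⟩ ?_
  rintro _ ⟨p, hp, rfl⟩
  have := csInf_le hbdd ⟨p, hp, rfl⟩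
  have := stdSimplex_sum_mul_le_add (hsub s a hp) huw
  dsimp only [sigma']
  linarith

lemma isTopical_bellman {S A : Type*} [Fintype S] [Fintype A] [Nonempty S] [Nonempty A]
    {P : S → A → Set (S → ℝ)} (hne : ∀ s a, (P s a).Nonempty)
    (hsub : ∀ s a, P s a ⊆ stdSimplex ℝ S) (r : S → A → ℝ) : IsTopical (bellman P r) := by
  intro Q Q' c h sa
  have := isTopical_sigma' hne hsub _ _ c (isTopical_sup' Q Q' c h) sa
  simp only [bellman]
  linarith

lemma spanSN_sub_le_of_supNorm_le {X : Type*} [Fintype X] [Nonempty X]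
    {F : (X → ℝ) → X → ℝ} (hF : IsTopical F) {Qstar : X → ℝ} {g : ℝ}
    (hstar : F Qstar = Qstar + g • 1) {Q T : X → ℝ} {ε : ℝ} (hT : supNorm (T - F Q) ≤ ε) :
    spanSN (T - Qstar) ≤ 2 * ε + spanSN (Q - Qstar) := by
  have hdecomp : T - Qstar = (T - F Q) + (F Q - F Qstar) + g • 1 := by rw [hstar]; abel
  calc spanSN (T - Qstar) ≤ spanSN ((T - F Q) + (F Q - F Qstar)) := by
        rw [hdecomp]; exact spanSN_add_smul_one_le _ _
    _ ≤ spanSN (T - F Q) + spanSN (F Q - F Qstar) := spanSN_add_le _ _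
    _ ≤ 2 * ε + spanSN (Q - Qstar) := by
        linarith [spanSN_le_two_mul_supNorm (T - F Q), hF.spanSN_sub_le Q Qstar]

/-- `T j` stands for an inexact evaluation of the operator at `Q j`. -/
def IsHalpernIteration {X : Type*} (n : ℕ) (Q T : ℕ → X → ℝ) : Prop :=
  ∀ k, 1 ≤ k → k ≤ n → Q k = (2 / ((k : ℝ) + 2)) • Q 0 + ((k : ℝ) / ((k : ℝ) + 2)) • T (k - 1)

namespace IsHalpernIteration

variable {X : Type*} {n : ℕ} {Q T : ℕ → X → ℝ}

lemma one_sub_zero (hQ : IsHalpernIteration n Q T) (hn : 1 ≤ n) :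
    Q 1 - Q 0 = (1 / 3 : ℝ) • (T 0 - Q 0) := by
  rw [hQ 1 le_rfl hn]
  funext x
  simp only [Pi.add_apply, Pi.sub_apply, Pi.smul_apply, smul_eq_mul, Nat.cast_one, Nat.sub_self]
  ring

lemma succ_sub_eq (hQ : IsHalpernIteration n Q T) {k : ℕ} (hk : 1 ≤ k) (hkn : k + 1 ≤ n) :
    Q (k + 1) - Q k = (((k : ℝ) + 1) / ((k : ℝ) + 3)) • (T k - T (k - 1)) +
      (2 / (((k : ℝ) + 2) * ((k : ℝ) + 3))) • (T (k - 1) - Q 0) := by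
  rw [hQ (k + 1) (by omega) hkn, hQ k hk (by omega), Nat.add_sub_cancel]
  funext x
  simp only [Pi.add_apply, Pi.sub_apply, Pi.smul_apply, smul_eq_mul, Nat.cast_add, Nat.cast_one]
  field_simp
  ring

lemma succ_sub_point_eq (hQ : IsHalpernIteration n Q T) {k : ℕ} (hkn : k + 1 ≤ n)
    (Qstar : X → ℝ) :
    Q (k + 1) - Qstar = (2 / ((k : ℝ) + 3)) • (Q 0 - Qstar) +
      (((k : ℝ) + 1) / ((k : ℝ) + 3)) • (T k - Qstar) := by
  rw [hQ (k + 1) (by omega) hkn, Nat.add_sub_cancel]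
  funext x
  simp only [Pi.add_apply, Pi.sub_apply, Pi.smul_apply, smul_eq_mul, Nat.cast_add, Nat.cast_one]
  field_simp
  ring

variable [Fintype X] [Nonempty X]

lemma spanSN_succ_sub_le (hQ : IsHalpernIteration n Q T) {k : ℕ} (hk : 1 ≤ k)
    (hkn : k + 1 ≤ n) :
    spanSN (Q (k + 1) - Q k) ≤ ((k : ℝ) + 1) / ((k : ℝ) + 3) * spanSN (T k - T (k - 1)) +
      2 / (((k : ℝ) + 2) * ((k : ℝ) + 3)) * spanSN (T (k - 1) - Q 0) := by
  rw [hQ.succ_sub_eq hk hkn]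
  refine (spanSN_add_le _ _).trans (add_le_add ?_ ?_) <;> exact spanSN_smul_le (by positivity) _

lemma spanSN_sub_le_spanSN_zero_sub_add (hQ : IsHalpernIteration n Q T) {Qstar : X → ℝ} {ε : ℝ}
    (hT : ∀ j ≤ n, spanSN (T j - Qstar) ≤ 2 * ε + spanSN (Q j - Qstar)) :
    ∀ j ≤ n, spanSN (Q j - Qstar) ≤ spanSN (Q 0 - Qstar) + 2 / 3 * ε * j := by
  intro j
  induction j with
  | zero => intro; simp
  | succ k ih =>
    intro hkn
    calc spanSN (Q (k + 1) - Qstar)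
        ≤ 2 / ((k : ℝ) + 3) * spanSN (Q 0 - Qstar) +
          ((k : ℝ) + 1) / ((k : ℝ) + 3) * spanSN (T k - Qstar) := by
          rw [hQ.succ_sub_point_eq hkn]
          refine (spanSN_add_le _ _).trans (add_le_add ?_ ?_) <;>
            exact spanSN_smul_le (by positivity) _
      _ ≤ 2 / ((k : ℝ) + 3) * spanSN (Q 0 - Qstar) + ((k : ℝ) + 1) / ((k : ℝ) + 3) *
          (2 * ε + (spanSN (Q 0 - Qstar) + 2 / 3 * ε * k)) := by
          gcongr
          exact (hT k (by omega)).trans (by linarith [ih (by omega)])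
      _ = spanSN (Q 0 - Qstar) + 2 / 3 * ε * ((k + 1 : ℕ) : ℝ) := by
          push_cast
          field_simp
          ring

lemma spanSN_sub_anchor_le (hQ : IsHalpernIteration n Q T) {Qstar : X → ℝ} {ε : ℝ}
    (hT : ∀ j ≤ n, spanSN (T j - Qstar) ≤ 2 * ε + spanSN (Q j - Qstar)) {j : ℕ} (hj : j ≤ n) :
    spanSN (T j - Q 0) ≤ 2 * spanSN (Q 0 - Qstar) + 2 / 3 * ε * ((j : ℝ) + 3) := by
  rw [← sub_sub_sub_cancel_right (T j) (Q 0) Qstar]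
  linarith [spanSN_sub_le (T j - Qstar) (Q 0 - Qstar), hT j hj,
    hQ.spanSN_sub_le_spanSN_zero_sub_add hT j hj]

end IsHalpernIteration

lemma halpern_rate_step {k S a b : ℝ} (hk : 0 < k) (hS : S ≤ k * a) (hab : a ≤ b) :
    (k + 1) / (k + 3) * (2 / (k * (k + 1)) * S) + 2 / ((k + 2) * (k + 3)) * a ≤
      2 / ((k + 1) * (k + 2)) * (S + b) := by
  have key : 2 / ((k + 1) * (k + 2)) * (S + b) -
      ((k + 1) / (k + 3) * (2 / (k * (k + 1)) * S) + 2 / ((k + 2) * (k + 3)) * a) =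
      2 * (k * (k + 3) * b - 2 * S - k * (k + 1) * a) / (k * (k + 1) * (k + 2) * (k + 3)) := by
    field_simp
    ring
  have hnum : 0 ≤ k * (k + 3) * b - 2 * S - k * (k + 1) * a := by
    nlinarith [mul_le_mul_of_nonneg_left hab (by positivity : (0 : ℝ) ≤ k * (k + 3))]
  rw [← sub_nonneg, key]
  positivity

lemma le_halpern_rate {n : ℕ} {d ρ : ℕ → ℝ} (hρ : Monotone ρ) (h1 : d 1 ≤ ρ 3)
    (hstep : ∀ k, 1 ≤ k → k + 1 ≤ n → d (k + 1) ≤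
      ((k : ℝ) + 1) / ((k : ℝ) + 3) * d k + 2 / (((k : ℝ) + 2) * ((k : ℝ) + 3)) * ρ (k + 2)) :
    ∀ k, 1 ≤ k → k ≤ n → d k ≤ 2 / ((k : ℝ) * ((k : ℝ) + 1)) * ∑ i ∈ Icc 1 k, ρ (i + 2) := by
  intro k hk
  induction k, hk using Nat.le_induction with
  | base => intro; norm_num [h1]
  | succ k hk ih =>
    intro hkn
    have hS : ∑ i ∈ Icc 1 k, ρ (i + 2) ≤ k * ρ (k + 2) := by
      simpa using sum_le_card_nsmul (Icc 1 k) (fun i => ρ (i + 2)) (ρ (k + 2))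
        fun i hi => hρ (by simp at hi; omega)
    calc d (k + 1) ≤ ((k : ℝ) + 1) / ((k : ℝ) + 3) *
          (2 / ((k : ℝ) * ((k : ℝ) + 1)) * ∑ i ∈ Icc 1 k, ρ (i + 2)) +
          2 / (((k : ℝ) + 2) * ((k : ℝ) + 3)) * ρ (k + 2) :=
          (hstep k hk hkn).trans (by gcongr; exact ih (by omega))
      _ ≤ 2 / (((k : ℝ) + 1) * ((k : ℝ) + 2)) * (∑ i ∈ Icc 1 k, ρ (i + 2) + ρ (k + 1 + 2)) :=
          halpern_rate_step (by positivity) hS (hρ (by omega))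
      _ = _ := by rw [sum_Icc_succ_top (by omega)]; push_cast; ring_nf

/-- Paper's Lemma A3: bound on consecutive-iterate differences of Robust Halpern
Iteration with inexact operator evaluations. -/
theorem stmt16 {S A : Type*} [Fintype S] [Fintype A] [Nonempty S] [Nonempty A]
    (P : S → A → Set (S → ℝ))
    (hne : ∀ s a, (P s a).Nonempty)
    (hsub : ∀ s a, P s a ⊆ stdSimplex ℝ S)
    (r : S → A → ℝ)
    (Qstar : S × A → ℝ) (gstar : ℝ)
    (hstar : bellman P r Qstar = Qstar + gstar • (1 : S × A → ℝ))
    (ε : ℝ) (hε : 0 ≤ ε) (n : ℕ)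
    (Q T : ℕ → (S × A → ℝ))
    (hrec : ∀ k, 1 ≤ k → k ≤ n →
      Q k = (2 / ((k : ℝ) + 2)) • Q 0 + ((k : ℝ) / ((k : ℝ) + 2)) • T (k - 1))
    (happrox : ∀ k ≤ n, supNorm (T k - bellman P r (Q k)) ≤ ε)
    (hTQ : ∀ k, 1 ≤ k → k ≤ n → spanSN (T k - T (k - 1)) ≤ spanSN (Q k - Q (k - 1)))
    (ρ : ℕ → ℝ) (hρ : ∀ j, ρ j = 2 * spanSN (Q 0 - Qstar) + (2 / 3) * ε * (j : ℝ)) :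
    ∀ k, 1 ≤ k → k ≤ n →
      spanSN (Q k - Q (k - 1)) ≤
        (2 / ((k : ℝ) * ((k : ℝ) + 1))) * ∑ i ∈ Finset.Icc 1 k, ρ (i + 2) := by
  have hQ : IsHalpernIteration n Q T := hrec
  have hT : ∀ j ≤ n, spanSN (T j - Qstar) ≤ 2 * ε + spanSN (Q j - Qstar) := fun j hj =>
    spanSN_sub_le_of_supNorm_le (isTopical_bellman hne hsub r) hstar (happrox j hj)
  have hanchor : ∀ j ≤ n, spanSN (T j - Q 0) ≤ ρ (j + 3) := fun j hj => by
    simpa [hρ] using hQ.spanSN_sub_anchor_le hT hj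
  have hρ_mono : Monotone ρ := fun i j hij => by
    simp only [hρ]; gcongr
  intro k hk hkn
  refine le_halpern_rate (n := n) (d := fun k => spanSN (Q k - Q (k - 1))) hρ_mono ?_
    (fun j hj hjn => ?_) k hk hkn
  · calc spanSN (Q 1 - Q (1 - 1)) ≤ 1 / 3 * spanSN (T 0 - Q 0) := by
          rw [Nat.sub_self, hQ.one_sub_zero (hk.trans hkn)]; exact spanSN_smul_le (by norm_num) _
      _ ≤ ρ 3 := by linarith [spanSN_nonneg (T 0 - Q 0), hanchor 0 (Nat.zero_le n)]
  · rw [Nat.add_sub_cancel]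
    refine (hQ.spanSN_succ_sub_le hj hjn).trans ?_
    gcongr
    · exact hTQ j hj (by omega)
    · exact (hanchor (j - 1) (by omega)).trans_eq (by congr 1; omega)
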